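/- In Ãₙ, the generator a_{n+1} satisfies a_{n+1} = a_n a_{n−1} ⋯ a₃ a₂ p_{n+1} (p_{n+1}⁻¹ p₁), where p_{n+1} = a₁a₂⋯aₙ; in particular, a_{n+1} lies in the subgroup generated by a₁,…,aₙ and N = ⟨pⱼ⁻¹pᵢ⟩, so Ãₙ = ⟨a₁,…,aₙ⟩ · N. -/

import Mathlib

open CoxeterMatrix

/-- The affine Coxeter matrix of type Ãₙ on the cyclic index set `ZMod (n+1)`:
`aᵢ² = 1`, `(aᵢa_{i+1})³ = 1`, and non-adjacent generators (mod n+1) commute. -/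
def affineA (n : ℕ) : CoxeterMatrix (ZMod (n + 1)) where
  M := fun i j => if i = j then 1 else if i = j + 1 ∨ j = i + 1 then 3 else 2
  isSymm := by
    ext i j
    by_cases h : i = j
    · change (if j = i then 1 else if j = i + 1 ∨ i = j + 1 then 3 else 2 : ℕ) = (if i = j then 1 else if i = j + 1 ∨ j = i + 1 then 3 else 2 : ℕ); simp [h]
    · change (if j = i then 1 else if j = i + 1 ∨ i = j + 1 then 3 else 2 : ℕ) = (if i = j then 1 else if i = j + 1 ∨ j = i + 1 then 3 else 2 : ℕ)
      rw [if_neg h, if_neg (Ne.symm h)]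
      exact if_congr or_comm rfl rfl
  diagonal := fun i => by simp
  off_diagonal := fun i j h => by
    simp only [if_neg h]
    split <;> simp

/-- The Coxeter generators `aᵢ` of `Ãₙ`. -/
def aa (n : ℕ) (i : ZMod (n + 1)) : (affineA n).Group := (affineA n).simple i

/-- The cyclic products `pⱼ = a_{j+1} a_{j+2} ⋯ a_{j-1}` (indices mod `n+1`). -/
def pp (n : ℕ) (j : ZMod (n + 1)) : (affineA n).Group :=
  ((List.range n).map fun k => aa n (j + 1 + (k : ℕ))).prod

/-- `gⱼ = pⱼ⁻¹ p_{j+1}`. -/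
def gg (n : ℕ) (j : ZMod (n + 1)) : (affineA n).Group := (pp n j)⁻¹ * pp n (j + 1)

/-- The subgroup `N = ⟨pⱼ⁻¹pᵢ : i, j⟩` of `Ãₙ`. -/
def NN (n : ℕ) : Subgroup (affineA n).Group :=
  Subgroup.closure {x | ∃ i j : ZMod (n + 1), x = (pp n j)⁻¹ * pp n i}

/-- The standard parabolic subgroup `⟨a₁,…,aₙ⟩` of `Ãₙ` (all generators except `a_{n+1} = a₀`). -/
def parab (n : ℕ) : Subgroup (affineA n).Group :=
  Subgroup.closure {x | ∃ i : ZMod (n + 1), i ≠ 0 ∧ x = aa n i}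

/-!
The generators are involutions, so `aₙ ⋯ a₂ = (a₂ ⋯ aₙ)⁻¹`, while `p₁ = a₂ ⋯ aₙ a_{n+1}`; hence
`aₙ ⋯ a₂ · p_{n+1} · (p_{n+1}⁻¹ p₁) = (a₂ ⋯ aₙ)⁻¹ p₁ = a_{n+1}`. The first two factors are words in
`a₁, …, aₙ` and the last lies in `N`, so every Coxeter generator lies in `⟨a₁, …, aₙ⟩ ⊔ N`.
-/

theorem CoxeterSystem.wordProd_mem_closure_simple_image {B W : Type*} [Group W]
    {M : CoxeterMatrix B} (cs : CoxeterSystem M W) {s : Set B} {ω : List B}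
    (hω : ∀ i ∈ ω, i ∈ s) : cs.wordProd ω ∈ Subgroup.closure (cs.simple '' s) :=
  Subgroup.list_prod_mem _ <| List.forall_mem_map.2 fun i hi =>
    Subgroup.subset_closure (Set.mem_image_of_mem _ (hω i hi))

theorem ZMod.natCast_ne_zero_of_pos_of_le {n k : ℕ} (hk : 0 < k) (hkn : k ≤ n) :
    (k : ZMod (n + 1)) ≠ 0 := by
  rw [Ne, ZMod.natCast_eq_zero_iff]
  exact fun h => absurd (Nat.le_of_dvd hk h) (by omega)

namespace AffineA

variable (n : ℕ)

theorem aa_eq_simple (i : ZMod (n + 1)) : aa n i = (affineA n).toCoxeterSystem.simple i := rfl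

theorem pp_eq_wordProd (j : ZMod (n + 1)) :
    pp n j =
      (affineA n).toCoxeterSystem.wordProd ((List.range n).map fun k : ℕ => j + 1 + k) := by
  rw [pp, CoxeterSystem.wordProd, List.map_map]
  rfl

theorem parab_eq_closure_simple_image :
    parab n = Subgroup.closure ((affineA n).toCoxeterSystem.simple '' {0}ᶜ) := by
  rw [parab]
  congr 1
  ext x
  simp [aa_eq_simple, eq_comm]

/-- The word `[2, 3, …, n]` of `a₂ ⋯ aₙ`. -/
def innerWord : List (ZMod (n + 1)) := (List.range' 2 (n - 1)).map Nat.cast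

theorem pp_one_eq (hn : 1 ≤ n) :
    pp n 1 = (affineA n).toCoxeterSystem.wordProd (innerWord n) * aa n 0 := by
  have hword : ((List.range n).map fun k : ℕ => (1 : ZMod (n + 1)) + 1 + k) =
      (List.range' 2 n).map Nat.cast := by
    rw [List.range'_eq_map_range, List.map_map]
    refine List.map_congr_left fun k _ => ?_
    simp only [Function.comp_apply, Nat.cast_add, Nat.cast_ofNat]
    ring
  obtain ⟨m, rfl⟩ := Nat.exists_eq_add_of_le' hn
  rw [pp_eq_wordProd, hword, List.range'_concat, List.map_append, CoxeterSystem.wordProd_append,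
    innerWord, Nat.add_sub_cancel, List.map_singleton, CoxeterSystem.wordProd_singleton,
    aa_eq_simple, show 2 + 1 * m = m + 1 + 1 by ring, ZMod.natCast_self]

theorem prod_descending_eq :
    ((List.range (n - 1)).map fun t => aa n ((n - t : ℕ))).prod =
      (affineA n).toCoxeterSystem.wordProd (innerWord n).reverse := by
  rw [innerWord, ← List.map_reverse, List.reverse_range', CoxeterSystem.wordProd, List.map_map,
    List.map_map]
  congr 1
  refine List.map_congr_left fun t ht => ?_
  rw [List.mem_range] at ht
  simp only [Function.comp_apply, aa_eq_simple]
  congr 2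
  omega

theorem aa_zero_eq (hn : 1 ≤ n) :
    aa n 0 = (affineA n).toCoxeterSystem.wordProd (innerWord n).reverse * pp n 0 *
      ((pp n 0)⁻¹ * pp n 1) := by
  rw [mul_assoc, mul_inv_cancel_left, pp_one_eq n hn, CoxeterSystem.wordProd_reverse,
    inv_mul_cancel_left]

theorem wordProd_mem_parab {ω : List (ZMod (n + 1))} (hω : ∀ i ∈ ω, i ≠ 0) :
    (affineA n).toCoxeterSystem.wordProd ω ∈ parab n := by
  rw [parab_eq_closure_simple_image]
  exact CoxeterSystem.wordProd_mem_closure_simple_image _ hω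

theorem pp_zero_mem_parab : pp n 0 ∈ parab n := by
  rw [pp_eq_wordProd]
  refine wordProd_mem_parab n <| List.forall_mem_map.2 fun k hk => ?_
  rw [show (0 : ZMod (n + 1)) + 1 + k = (k + 1 : ℕ) by push_cast; ring]
  exact ZMod.natCast_ne_zero_of_pos_of_le (by omega) (by simpa using hk)

theorem wordProd_innerWord_reverse_mem_parab :
    (affineA n).toCoxeterSystem.wordProd (innerWord n).reverse ∈ parab n := by
  refine wordProd_mem_parab n fun i hi => ?_
  obtain ⟨k, hk, rfl⟩ := List.mem_map.1 (List.mem_reverse.1 hi)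
  rw [List.mem_range'_1] at hk
  exact ZMod.natCast_ne_zero_of_pos_of_le (by omega) (by omega)

theorem pp_inv_mul_mem_NN (i j : ZMod (n + 1)) : (pp n j)⁻¹ * pp n i ∈ NN n :=
  Subgroup.subset_closure ⟨i, j, rfl⟩

theorem parab_sup_NN_eq_top (hn : 1 ≤ n) : parab n ⊔ NN n = ⊤ := by
  rw [eq_top_iff, ← (affineA n).toCoxeterSystem.subgroup_closure_range_simple,
    Subgroup.closure_le]
  rintro _ ⟨i, rfl⟩
  rw [SetLike.mem_coe, ← aa_eq_simple]
  rcases eq_or_ne i 0 with rfl | hi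
  · rw [aa_zero_eq n hn]
    exact mul_mem
      (mul_mem (Subgroup.mem_sup_left (wordProd_innerWord_reverse_mem_parab n))
        (Subgroup.mem_sup_left (pp_zero_mem_parab n)))
      (Subgroup.mem_sup_right (pp_inv_mul_mem_NN n 1 0))
  · exact Subgroup.mem_sup_left (Subgroup.subset_closure ⟨i, hi, rfl⟩)

end AffineA

/-- In `Ãₙ`, `a_{n+1} = aₙ a_{n−1} ⋯ a₂ · p_{n+1} · (p_{n+1}⁻¹ p₁)` (here `a_{n+1} = a₀` and
`p_{n+1} = p₀` mod `n+1`); consequently `Ãₙ = ⟨a₁,…,aₙ⟩ · N`. -/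
theorem stmt13 (n : ℕ) (hn : 2 ≤ n) :
    aa n ((n + 1 : ℕ)) =
      ((List.range (n - 1)).map fun t => aa n ((n - t : ℕ))).prod *
        pp n ((n + 1 : ℕ)) * ((pp n ((n + 1 : ℕ)))⁻¹ * pp n 1) ∧
    parab n ⊔ NN n = ⊤ := by
  rw [ZMod.natCast_self, AffineA.prod_descending_eq]
  exact ⟨AffineA.aa_zero_eq n (by omega), AffineA.parab_sup_NN_eq_top n (by omega)⟩
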